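/- For every frame F = (S,R): F satisfies ∀x∀y∀z(xRy ∧ yRz ∧ x≠y ∧ y≠z ∧ x≠z → xRz) if and only if the LEA-formula (∘p ∧ p) → ∘(∘p ∧ p) is valid on F. -/
import Mathlib


/-- The language LEA of essence and accident. -/
inductive LEAForm : Type
  | atom : ℕ → LEAForm
  | neg : LEAForm → LEAForm
  | and : LEAForm → LEAForm → LEAForm
  | ess : LEAForm → LEAForm

/-- A Kripke model (the frame is (W, R)). -/
structure Model (W : Type) where
  R : W → W → Prop
  V : ℕ → W → Prop

/-- Satisfaction for LEA. -/
def satLEA {W : Type} (M : Model W) : W → LEAForm → Prop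
  | w, .atom p => M.V p w
  | w, .neg φ => ¬ satLEA M w φ
  | w, .and φ ψ => satLEA M w φ ∧ satLEA M w ψ
  | w, .ess φ => satLEA M w φ → ∀ v, M.R w v → satLEA M v φ

/-- Implication, defined as usual. -/
def impF (φ ψ : LEAForm) : LEAForm := .neg (.and φ (.neg ψ))
/-- A frame satisfies ∀x∀y∀z(xRy ∧ yRz ∧ x≠y ∧ y≠z ∧ x≠z → xRz) iff
(∘p ∧ p) → ∘(∘p ∧ p) is valid on it. -/
theorem stmt7 (W : Type) [Nonempty W] (R : W → W → Prop) :
    (∀ x y z, R x y → R y z → x ≠ y → y ≠ z → x ≠ z → R x z) ↔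
      (∀ (V : ℕ → W → Prop) (s : W),
        satLEA ⟨R, V⟩ s
          (impF (.and (.ess (.atom 0)) (.atom 0))
            (.ess (.and (.ess (.atom 0)) (.atom 0))))) := by
  constructor
  · intro h V s
    simp only [impF, satLEA, not_and, not_not]
    rintro ⟨hess, hp⟩ _ v hsv
    refine ⟨?_, hess hp v hsv⟩
    intro hpv u hvu
    by_cases hsv' : s = v
    · exact hess hp u (hsv' ▸ hvu)
    · by_cases hvu' : v = u
      · exact hvu' ▸ hpv
      · by_cases hsu : s = u
        · exact hsu ▸ hp
        · exact hess hp u (h s v u hsv hvu hsv' hvu' hsu)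
  · intro h x y z hxy hyz hne1 hne2 hne3
    have := h (fun _ w => R x w ∨ w = x) x
    simp only [impF, satLEA, not_and, not_not] at this
    have hx : ((R x x ∨ True) → ∀ v, R x v → (R x v ∨ v = x)) ∧ (R x x ∨ True) :=
      ⟨fun _ v hv => Or.inl hv, Or.inr trivial⟩
    have hy := (this hx hx y hxy).1
    have hpy : R x y ∨ y = x := Or.inl hxy
    rcases hy hpy z hyz with hz | hz
    · exact hz
    · exact absurd hz.symm hne3
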